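/- For every k ≥ 1, the double integral over (-1,1)² of (T_k'(x) - T_k'(y))/(x - y) against the product of semicircle measures equals -4k · ∫_{-1}^{1} T_k(x) μ_sc(dx); equivalently it equals 2k·δ_{k,2}. -/

import Mathlib

open MeasureTheory Real Polynomial

/-- The `k`-th Chebyshev polynomial of the first kind, as a function `ℝ → ℝ`. -/
noncomputable def chebT (k : ℤ) (x : ℝ) : ℝ := (Polynomial.Chebyshev.T ℝ k).eval x

/-- Its derivative `T_k'` as a function. -/
noncomputable def chebT' (k : ℤ) (x : ℝ) : ℝ :=
  (Polynomial.derivative (Polynomial.Chebyshev.T ℝ k)).eval x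

/-- Its second derivative `T_k''` as a function. -/
noncomputable def chebT'' (k : ℤ) (x : ℝ) : ℝ :=
  (Polynomial.derivative (Polynomial.derivative (Polynomial.Chebyshev.T ℝ k))).eval x

/-- The density of the semicircle law on `(-1,1)`. -/
noncomputable def semicircleDensity (y : ℝ) : ℝ := (2 / Real.pi) * Real.sqrt (1 - y ^ 2)

/-!
Since `T_k' = k U_{k-1}` and `(U_n(x) - U_n(y)) / (x - y) = 2 ∑_{i+j=n-1} U_i(x) U_j(y)`, the
kernel is separable off the (null) diagonal, so the double integral is `2k ∑_{i+j=k-2} m_i m_j`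
with `m_j = ∫ U_j dμ_sc`. On `(-1,1)` we have `μ_sc = (2/π) (1 - x²) dT`, where
`dT = dx / √(1 - x²)` is the Chebyshev measure, and `2 (1 - x²) U_n = T_n - T_{n+2}`; hence
`∫ T_n dT = π δ_{n,0}` gives `m_j = δ_{j,0}`, and `2 T_k = U_k - U_{k-2}` gives
`∫ T_k dμ_sc = δ_{k,0} - δ_{k,2} / 2` for `k ≥ 0`.
-/

open Finset Set

namespace Polynomial.Chebyshev

theorem two_mul_one_sub_X_sq_mul_U (R : Type*) [CommRing R] (n : ℤ) :
    2 * ((1 - X ^ 2) * U R n) = T R n - T R (n + 2) := by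
  have h := T_mul_T R 1 (n + 1)
  rw [T_one, show (1 : ℤ) + (n + 1) = n + 2 by ring, show (1 : ℤ) - (n + 1) = -n by ring,
    T_neg] at h
  linear_combination 2 * one_sub_X_sq_mul_U_eq_pol_in_T R n + h

section DividedDifference

variable {R : Type*} [CommRing R]

theorem sum_range_U_eval_mul_U_eval_add_two (n : ℕ) (x y : R) :
    ∑ i ∈ range (n + 2), (U R i).eval x * (U R (n + 1 - i)).eval y =
      (U R (n + 1)).eval y
        + 2 * x * ∑ i ∈ range (n + 1), (U R i).eval x * (U R (n - i)).eval y
        - ∑ i ∈ range n, (U R i).eval x * (U R (n - 1 - i)).eval y := by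
  have h_shift : ∑ i ∈ range (n + 2), (U R i).eval x * (U R (n + 1 - i)).eval y =
      ∑ i ∈ range (n + 1), (U R (i + 1)).eval x * (U R (n - i)).eval y
        + (U R (n + 1)).eval y := by
    rw [sum_range_succ']
    congr 1
    · refine sum_congr rfl fun i _ => ?_
      push_cast
      ring_nf
    · simp
  have h_shift_back : ∑ i ∈ range (n + 1), (U R (i - 1)).eval x * (U R (n - i)).eval y =
      ∑ i ∈ range n, (U R i).eval x * (U R (n - 1 - i)).eval y := by
    rw [sum_range_succ']
    simp only [Nat.cast_zero, zero_sub, U_neg_one, eval_zero, zero_mul, add_zero]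
    refine sum_congr rfl fun i _ => ?_
    push_cast
    ring_nf
  rw [h_shift, ← h_shift_back, mul_sum]
  simp only [U_add_one, eval_sub, eval_mul, eval_X, eval_ofNat, sub_mul, sum_sub_distrib, mul_assoc]
  ring

theorem U_eval_sub_U_eval (n : ℕ) (x y : R) :
    (U R n).eval x - (U R n).eval y =
      2 * (x - y) * ∑ i ∈ range n, (U R i).eval x * (U R (n - 1 - i)).eval y := by
  induction n using Nat.twoStepInduction with
  | zero => simp
  | one =>
    simp only [Nat.cast_one, U_one, eval_mul, eval_ofNat, eval_X, range_one, sum_singleton,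
      Nat.cast_zero, U_zero, eval_one, sub_self, mul_one]
    ring
  | more n ih₀ ih₁ =>
    push_cast at ih₁ ⊢
    rw [show (n : ℤ) + 2 - 1 = n + 1 by ring, sum_range_U_eval_mul_U_eval_add_two,
      show (n : ℤ) + 2 = n + 2 by ring, U_add_two]
    rw [add_sub_cancel_right] at ih₁
    simp only [eval_sub, eval_mul, eval_X, eval_ofNat]
    linear_combination 2 * x * ih₁ - ih₀

end DividedDifference

theorem integral_eval_T_real_measureT (n : ℤ) :
    ∫ x, (T ℝ n).eval x ∂measureT = if n = 0 then π else 0 := by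
  split_ifs with hn
  · rw [hn, integral_eval_T_real_measureT_zero]
  · exact integral_eval_T_real_measureT_of_ne_zero hn

end Polynomial.Chebyshev

open Polynomial.Chebyshev

theorem integral_mul_semicircleDensity_eq_integral_measureT (f : ℝ → ℝ) :
    ∫ x in Ioo (-1 : ℝ) 1, f x * semicircleDensity x =
      2 / π * ∫ x, f x * (1 - x ^ 2) ∂measureT := by
  rw [integral_measureT, intervalIntegral.integral_of_le (by norm_num), ← integral_const_mul,
    integral_Ioc_eq_integral_Ioo]
  refine setIntegral_congr_fun measurableSet_Ioo fun x _ => ?_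
  rw [semicircleDensity, Real.sqrt_inv, ← div_eq_mul_inv, mul_div_assoc, Real.div_sqrt]
  ring

theorem integrableOn_mul_semicircleDensity {f : ℝ → ℝ} (hf : Continuous f) :
    IntegrableOn (fun x => f x * semicircleDensity x) (Ioo (-1) 1) := by
  refine (Continuous.integrableOn_Icc ?_).mono_set Ioo_subset_Icc_self
  unfold semicircleDensity
  fun_prop

theorem integral_eval_U_mul_semicircleDensity (n : ℤ) :
    ∫ x in Ioo (-1 : ℝ) 1, (U ℝ n).eval x * semicircleDensity x =
      (if n = 0 then 1 else 0) - if n = -2 then 1 else 0 := by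
  have hU (x : ℝ) :
      (U ℝ n).eval x * (1 - x ^ 2) = ((T ℝ n).eval x - (T ℝ (n + 2)).eval x) / 2 := by
    have := congrArg (eval x) (two_mul_one_sub_X_sq_mul_U ℝ n)
    simp only [eval_mul, eval_sub, eval_pow, eval_X, eval_one, eval_ofNat] at this
    linear_combination this / 2
  simp_rw [integral_mul_semicircleDensity_eq_integral_measureT, hU]
  rw [integral_div, integral_sub (integrable_measureT (by fun_prop))
    (integrable_measureT (by fun_prop)), integral_eval_T_real_measureT,
    integral_eval_T_real_measureT]
  simp only [add_eq_zero_iff_eq_neg]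
  split_ifs <;> first | omega | simp [pi_ne_zero]

theorem integral_chebT_mul_semicircleDensity (n : ℤ) :
    ∫ x in Ioo (-1 : ℝ) 1, chebT n x * semicircleDensity x =
      (if n = 0 then 1 else 0) - ((if n = 2 then 1 else 0) + (if n = -2 then 1 else 0)) / 2 := by
  have hT (x : ℝ) : chebT n x * semicircleDensity x =
      ((U ℝ n).eval x * semicircleDensity x - (U ℝ (n - 2)).eval x * semicircleDensity x) / 2 := by
    have := congrArg (eval x) (two_mul_T_eq_U_sub_U ℝ (n - 2))
    simp only [sub_add_cancel, eval_mul, eval_sub, eval_ofNat] at this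
    rw [chebT]
    linear_combination semicircleDensity x * this / 2
  simp_rw [hT]
  rw [integral_div, integral_sub (integrableOn_mul_semicircleDensity (by fun_prop))
    (integrableOn_mul_semicircleDensity (by fun_prop)), integral_eval_U_mul_semicircleDensity,
    integral_eval_U_mul_semicircleDensity]
  simp only [sub_eq_iff_eq_add]
  split_ifs <;> first | omega | norm_num

theorem integral_integral_sum_mul_semicircleDensity {ι : Type*} (s : Finset ι)
    {f g : ι → ℝ → ℝ} (hf : ∀ i, Continuous (f i)) (hg : ∀ i, Continuous (g i)) :
    ∫ x in Ioo (-1 : ℝ) 1,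
        (∫ y in Ioo (-1 : ℝ) 1, (∑ i ∈ s, f i x * g i y) * semicircleDensity y) *
          semicircleDensity x =
      ∑ i ∈ s, (∫ x in Ioo (-1 : ℝ) 1, f i x * semicircleDensity x) *
        ∫ y in Ioo (-1 : ℝ) 1, g i y * semicircleDensity y := by
  have h_inner (x : ℝ) :
      ∫ y in Ioo (-1 : ℝ) 1, (∑ i ∈ s, f i x * g i y) * semicircleDensity y =
        ∑ i ∈ s, f i x * ∫ y in Ioo (-1 : ℝ) 1, g i y * semicircleDensity y := by
    simp_rw [sum_mul, mul_assoc]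
    rw [integral_finsetSum _ fun i _ => (integrableOn_mul_semicircleDensity (hg i)).const_mul _]
    simp_rw [integral_const_mul]
  simp_rw [h_inner, sum_mul, mul_right_comm (f _ _)]
  rw [integral_finsetSum _ fun i _ => (integrableOn_mul_semicircleDensity (hf i)).mul_const _]
  simp_rw [integral_mul_const]

theorem chebT'_sub_chebT' (k : ℕ) (x y : ℝ) :
    chebT' k x - chebT' k y =
      (x - y) * ∑ i ∈ range (k - 1), 2 * k * (U ℝ i).eval x * (U ℝ (k - 2 - i)).eval y := by
  rcases k with _ | m
  · simp [chebT']
  · have hidx (i : ℕ) : (m : ℤ) + 1 - 2 - i = m - 1 - i := by ring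
    simp only [chebT', T_derivative_eq_U, eval_mul]
    push_cast
    simp only [eval_add, eval_natCast, eval_one, add_sub_cancel_right, hidx, mul_assoc, ← mul_sum]
    rw [← mul_sub, U_eval_sub_U_eval]
    ring

theorem integral_divDiff_chebT'_mul_semicircleDensity (k : ℕ) (x : ℝ) :
    ∫ y in Ioo (-1 : ℝ) 1,
        (if y = x then chebT'' k x else (chebT' k x - chebT' k y) / (x - y)) *
          semicircleDensity y =
      ∫ y in Ioo (-1 : ℝ) 1,
        (∑ i ∈ range (k - 1), 2 * k * (U ℝ i).eval x * (U ℝ (k - 2 - i)).eval y) *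
          semicircleDensity y := by
  refine integral_congr_ae ?_
  filter_upwards [ae_restrict_of_ae (compl_mem_ae_iff.2 (measure_singleton x))] with y (hy : y ≠ x)
  rw [if_neg hy, chebT'_sub_chebT', mul_div_cancel_left₀ _ (sub_ne_zero.2 hy.symm)]

theorem integral_integral_divDiff_chebT'_mul_semicircleDensity (k : ℕ) :
    ∫ x in Ioo (-1 : ℝ) 1,
        (∫ y in Ioo (-1 : ℝ) 1,
            (if y = x then chebT'' k x else (chebT' k x - chebT' k y) / (x - y)) *
              semicircleDensity y) * semicircleDensity x =
      2 * k * if k = 2 then 1 else 0 := by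
  simp_rw [integral_divDiff_chebT'_mul_semicircleDensity]
  rw [integral_integral_sum_mul_semicircleDensity _ (fun _ => by fun_prop) (fun _ => by fun_prop)]
  simp_rw [mul_assoc, integral_const_mul, integral_eval_U_mul_semicircleDensity]
  rw [sum_eq_single 0 (fun i _ hi => by simp [hi]) (fun h => ?_)]
  · split_ifs <;> first | omega | simp_all
  · obtain rfl | rfl : k = 0 ∨ k = 1 := by rw [Finset.mem_range] at h; omega
    all_goals norm_num

theorem chebyshev_double_integral_general (k : ℕ) :
    (∫ x in Set.Ioo (-1 : ℝ) 1,
        (∫ y in Set.Ioo (-1 : ℝ) 1,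
            (if y = x then chebT'' k x else (chebT' k x - chebT' k y) / (x - y)) *
              semicircleDensity y) * semicircleDensity x)
      = -4 * k * ∫ x in Set.Ioo (-1 : ℝ) 1, chebT k x * semicircleDensity x ∧
    (∫ x in Set.Ioo (-1 : ℝ) 1,
        (∫ y in Set.Ioo (-1 : ℝ) 1,
            (if y = x then chebT'' k x else (chebT' k x - chebT' k y) / (x - y)) *
              semicircleDensity y) * semicircleDensity x)
      = 2 * k * (if k = 2 then (1 : ℝ) else 0) := by
  have h_double := integral_integral_divDiff_chebT'_mul_semicircleDensity k
  refine ⟨?_, h_double⟩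
  rw [h_double, integral_chebT_mul_semicircleDensity]
  push_cast
  rcases eq_or_ne k 2 with rfl | hk2
  · norm_num
  · have hk2' : (k : ℤ) ≠ 2 := by exact_mod_cast hk2
    rcases eq_or_ne k 0 with rfl | hk0 <;> simp [*]

/-- for every `k ≥ 1`,
`∬_{(-1,1)²} (T_k'(x) - T_k'(y))/(x - y) μ_sc(dx)μ_sc(dy) = -4k ∫ T_k dμ_sc = 2k δ_{k,2}`,
the integrand being interpreted as `T_k''(x)` on the diagonal. -/
theorem chebyshev_double_integral (k : ℕ) (hk : 1 ≤ k) :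
    (∫ x in Set.Ioo (-1 : ℝ) 1,
        (∫ y in Set.Ioo (-1 : ℝ) 1,
            (if y = x then chebT'' k x else (chebT' k x - chebT' k y) / (x - y)) *
              semicircleDensity y) * semicircleDensity x)
      = -4 * k * ∫ x in Set.Ioo (-1 : ℝ) 1, chebT k x * semicircleDensity x ∧
    (∫ x in Set.Ioo (-1 : ℝ) 1,
        (∫ y in Set.Ioo (-1 : ℝ) 1,
            (if y = x then chebT'' k x else (chebT' k x - chebT' k y) / (x - y)) *
              semicircleDensity y) * semicircleDensity x)
      = 2 * k * (if k = 2 then (1 : ℝ) else 0) :=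
  chebyshev_double_integral_general k
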